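/- Let 0 ≤ a < s < b ≤ m. If (𝒫,𝒬) is a 2-partition of a vertebrate family 𝒥 with (s−1,s) ∈ 𝒫 and (s,s+1) ∈ 𝒬, then α(𝒫,a,b) = α(𝒫 ∩ 𝒥(0,s), a, s) + α(𝒫 ∩ 𝒥(s,m), s, b), and α(𝒬,a,b) = α(𝒬 ∩ 𝒥(0,s), a, s) + α(𝒬 ∩ 𝒥(s,m), s, b). -/

import Mathlib

/-- The open real interval corresponding to an integer pair `(a, b)`. -/
def iv (p : ℤ × ℤ) : Set ℝ := Set.Ioo (p.1 : ℝ) (p.2 : ℝ)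

/-- Two integer-endpoint open intervals intersect (share a point). -/
def Meets (p q : ℤ × ℤ) : Prop := (iv p ∩ iv q).Nonempty

/-- A vertebrate family: distinct open intervals with integer endpoints contained in
`[0, m]`, containing the `m` unit intervals `(i-1, i)` for `1 ≤ i ≤ m`. -/
def Vertebrate (m : ℤ) (J : Finset (ℤ × ℤ)) : Prop :=
  (∀ p ∈ J, 0 ≤ p.1 ∧ p.1 < p.2 ∧ p.2 ≤ m) ∧
  (∀ i : ℤ, 1 ≤ i → i ≤ m → ((i - 1, i) : ℤ × ℤ) ∈ J)

/-- `Bar v R S` (written `ℛ∣𝒮`): every interval in `R` intersects at most `v`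
pairwise disjoint intervals of `S` other than itself. -/
def Bar (v : ℕ) (R S : Finset (ℤ × ℤ)) : Prop :=
  ∀ p ∈ R, ∀ T ⊆ S.erase p,
    ((T : Set (ℤ × ℤ)).Pairwise fun a b => ¬ Meets a b) →
    (∀ q ∈ T, Meets p q) → T.card ≤ v

/-- An (ordered) 2-partition of a family `S`. -/
def TwoPartition (P Q S : Finset (ℤ × ℤ)) : Prop := P ∪ Q = S ∧ Disjoint P Q

/-- A good 2-partition: each part satisfies `𝒮∣𝒮`. -/
def GoodPartition (v : ℕ) (P Q S : Finset (ℤ × ℤ)) : Prop :=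
  TwoPartition P Q S ∧ Bar v P P ∧ Bar v Q Q

/-- `Jsub S l r` = the subfamily of intervals of `S` contained in `(l, r)`. -/
def Jsub (S : Finset (ℤ × ℤ)) (l r : ℤ) : Finset (ℤ × ℤ) :=
  S.filter fun p => l ≤ p.1 ∧ p.2 ≤ r

/-- The subfamily of intervals of length at most `v`. -/
def Jle (v : ℕ) (S : Finset (ℤ × ℤ)) : Finset (ℤ × ℤ) := S.filter fun p => p.2 - p.1 ≤ (v : ℤ)

/-- The subfamily of intervals of length greater than `v`. -/
def Jgt (v : ℕ) (S : Finset (ℤ × ℤ)) : Finset (ℤ × ℤ) := S.filter fun p => (v : ℤ) < p.2 - p.1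

/-- `Ksub S s` = the subfamily of intervals `(a, b) ∈ S` with `a < s < b`. -/
def Ksub (S : Finset (ℤ × ℤ)) (s : ℤ) : Finset (ℤ × ℤ) := S.filter fun p => p.1 < s ∧ s < p.2

/-- `alphaF S l r` = maximum size of a subfamily of pairwise disjoint intervals of `S`
each of which intersects the interval `(l, r)`. -/
noncomputable def alphaF (S : Finset (ℤ × ℤ)) (l r : ℤ) : ℕ :=
  sSup {k : ℕ | ∃ T ⊆ S, T.card = k ∧
    ((T : Set (ℤ × ℤ)).Pairwise fun a b => ¬ Meets a b) ∧ ∀ p ∈ T, Meets p (l, r)}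

/-- `idx v R u s` = the maximum `i ∈ [0, s]` such that `u ≤ alphaF R i s ≤ v + 1`,
or `-1` if no such index exists. -/
noncomputable def idx (v : ℕ) (R : Finset (ℤ × ℤ)) (u : ℕ) (s : ℤ) : ℤ :=
  sSup (insert (-1) {i : ℤ | 0 ≤ i ∧ i ≤ s ∧ u ≤ alphaF R i s ∧ alphaF R i s ≤ v + 1})

/-- An `s`-monotonic sequence `r = ⟨r_0, …, r_{v+2}⟩`. -/
def SMonotonic (v : ℕ) (s : ℤ) (r : ℕ → ℤ) : Prop :=
  r 0 = s ∧ r (v + 2) = -1 ∧ (∀ u ≤ v + 1, r (u + 1) ≤ r u) ∧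
  ∀ u ≤ v + 1, (r (u + 1) = -1 ∧ r u = -1) ∨ r (u + 1) < r u

/-- An `s`-monotonic sequence `r` encodes `R ⊆ 𝒥(0,s)` if `r_u = i(R, u, s)` for all `u`. -/
def Encodes (v : ℕ) (r : ℕ → ℤ) (R : Finset (ℤ × ℤ)) (s : ℤ) : Prop :=
  ∀ u ≤ v + 2, r u = idx v R u s

/-- `alphaSeq v r i` = the maximum `u ∈ [0, v+1]` with `i ≤ r u`. -/
noncomputable def alphaSeq (v : ℕ) (r : ℕ → ℤ) (i : ℤ) : ℕ :=
  sSup {u : ℕ | u ≤ v + 1 ∧ i ≤ r u}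

/-- `(l, r)` is a vertebrate range for the 2-partition `(P, Q)` of `𝒥(0,s)`:
all backbone unit intervals contained in `(l, r)` lie in the same part. -/
def VertRange (P Q : Finset (ℤ × ℤ)) (s l r : ℤ) : Prop :=
  0 ≤ l ∧ l < r ∧ r ≤ s ∧
  ((∀ i : ℤ, l < i → i ≤ r → ((i - 1, i) : ℤ × ℤ) ∈ P) ∨
   (∀ i : ℤ, l < i → i ≤ r → ((i - 1, i) : ℤ × ℤ) ∈ Q))

/-- A maximal vertebrate range. -/
def MaxVertRange (P Q : Finset (ℤ × ℤ)) (s l r : ℤ) : Prop :=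
  VertRange P Q s l r ∧
  ∀ l' r', VertRange P Q s l' r' → l' ≤ l → r ≤ r' → l' = l ∧ r' = r

/-- A 2-partition `(P, Q)` of `𝒥(0,s)` is basic if for every maximal vertebrate range
`(l, r)` its induced 2-partition of `𝒥(l,r)` is `(𝒥_≤(l,r), 𝒥_>(l,r))` or the swap. -/
def Basic (v : ℕ) (J P Q : Finset (ℤ × ℤ)) (s : ℤ) : Prop :=
  ∀ l r : ℤ, MaxVertRange P Q s l r →
    (P ∩ Jsub J l r = Jle v (Jsub J l r) ∧ Q ∩ Jsub J l r = Jgt v (Jsub J l r)) ∨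
    (P ∩ Jsub J l r = Jgt v (Jsub J l r) ∧ Q ∩ Jsub J l r = Jle v (Jsub J l r))

/-- `(p, q)` (a pair of `s`-monotonic sequences) extends `(p', q')` (a pair of
`s'`-monotonic sequences) by the 2-partition `(E, F)` of `𝒦_{s'} ∖ 𝒦_s`. -/
def ExtendsBy (v : ℕ) (J : Finset (ℤ × ℤ)) (s' s : ℤ) (p q p' q' : ℕ → ℤ)
    (E F : Finset (ℤ × ℤ)) : Prop :=
  let D := Jgt v (Jsub J s' s)
  let w := alphaF D s' s
  let w' := alphaF (F ∪ D) s' s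
  let d := (s - s').toNat
  (∀ u : ℕ, 1 ≤ u → u ≤ min d (v + 1) → p u = s - (u : ℤ)) ∧
  (∀ u : ℕ, d < u → u ≤ v + 1 → p u = p' (u - d)) ∧
  (∀ u : ℕ, 1 ≤ u → u ≤ min w' (v + 1) → q u = idx v (F ∪ D) u s) ∧
  (∀ u : ℕ, w' < u → u ≤ v + 1 → q u = q' (u - w))

/-- The dynamic-programming predicate `Y(s, p, q, 𝒜, ℬ)`. -/
def Ypred (v : ℕ) (J : Finset (ℤ × ℤ)) (s : ℤ) (p q : ℕ → ℤ)
    (A B : Finset (ℤ × ℤ)) : Prop :=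
  ∃ P Q : Finset (ℤ × ℤ), TwoPartition P Q (Jsub J 0 s) ∧
    Bar v P P ∧ Bar v Q Q ∧ Basic v J P Q s ∧
    Encodes v p P s ∧ Encodes v q Q s ∧
    Bar v P (P ∪ A) ∧ Bar v Q (Q ∪ B) ∧
    (0 < s → ((s - 1, s) : ℤ × ℤ) ∈ P)

/-- Two intervals overlap significantly: their intersection has length at least `2v+1`. -/
def SigOverlap (v : ℕ) (p q : ℤ × ℤ) : Prop :=
  (2 * (v : ℤ) + 1) ≤ min p.2 q.2 - max p.1 q.1

/-- The significant-overlap graph `H` on a family `J`. -/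
def Hgraph (v : ℕ) (J : Finset (ℤ × ℤ)) : SimpleGraph {p : ℤ × ℤ // p ∈ J} :=
  SimpleGraph.fromRel fun p q => SigOverlap v p.1 q.1

section AlphaCutAux

lemma meets_iff (p q : ℤ × ℤ) : Meets p q ↔ max p.1 q.1 < min p.2 q.2 := by
  unfold Meets iv
  rw [Set.Ioo_inter_Ioo, Set.nonempty_Ioo]
  constructor
  · intro h
    have h2 : ((max p.1 q.1 : ℤ) : ℝ) < ((min p.2 q.2 : ℤ) : ℝ) := by push_cast; exact h
    exact_mod_cast h2
  · intro h
    have h2 : ((max p.1 q.1 : ℤ) : ℝ) < ((min p.2 q.2 : ℤ) : ℝ) := by exact_mod_cast h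
    push_cast at h2; exact h2

lemma meets_comm {p q : ℤ × ℤ} : Meets p q ↔ Meets q p := by
  rw [meets_iff, meets_iff, max_comm, min_comm]

lemma meets_symmetric : Symmetric fun a b : ℤ × ℤ => ¬ Meets a b :=
  fun _ _ h hm => h (meets_comm.mp hm)

/-- The defining set of `alphaF`. -/
def ASet (S : Finset (ℤ × ℤ)) (l r : ℤ) : Set ℕ :=
  {k : ℕ | ∃ T ⊆ S, T.card = k ∧
    ((T : Set (ℤ × ℤ)).Pairwise fun a b => ¬ Meets a b) ∧ ∀ p ∈ T, Meets p (l, r)}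

lemma alphaF_eq (S : Finset (ℤ × ℤ)) (l r : ℤ) : alphaF S l r = sSup (ASet S l r) := rfl

lemma ASet_bdd (S : Finset (ℤ × ℤ)) (l r : ℤ) : BddAbove (ASet S l r) := by
  refine ⟨S.card, ?_⟩
  rintro k ⟨T, hT, rfl, -, -⟩
  exact Finset.card_le_card hT

lemma ASet_nonempty (S : Finset (ℤ × ℤ)) (l r : ℤ) : (ASet S l r).Nonempty :=
  ⟨0, ∅, Finset.empty_subset _, Finset.card_empty, by simp, by simp⟩

lemma le_alphaF {S T : Finset (ℤ × ℤ)} {l r : ℤ} (hT : T ⊆ S)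
    (h1 : (T : Set (ℤ × ℤ)).Pairwise fun a b => ¬ Meets a b)
    (h2 : ∀ p ∈ T, Meets p (l, r)) : T.card ≤ alphaF S l r :=
  le_csSup (ASet_bdd S l r) ⟨T, hT, rfl, h1, h2⟩

lemma alphaF_le {S : Finset (ℤ × ℤ)} {l r : ℤ} {n : ℕ}
    (h : ∀ T ⊆ S, ((T : Set (ℤ × ℤ)).Pairwise fun a b => ¬ Meets a b) →
      (∀ p ∈ T, Meets p (l, r)) → T.card ≤ n) : alphaF S l r ≤ n := by
  refine csSup_le (ASet_nonempty S l r) ?_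
  rintro k ⟨T, hT, rfl, h1, h2⟩
  exact h T hT h1 h2

lemma exists_alphaF (S : Finset (ℤ × ℤ)) (l r : ℤ) :
    ∃ T ⊆ S, T.card = alphaF S l r ∧
      ((T : Set (ℤ × ℤ)).Pairwise fun a b => ¬ Meets a b) ∧ ∀ p ∈ T, Meets p (l, r) :=
  Nat.sSup_mem (ASet_nonempty S l r) (ASet_bdd S l r)

lemma cut_ge (m : ℤ) (J S : Finset (ℤ × ℤ)) (hSJ : S ⊆ J)
    (hJ : ∀ p ∈ J, 0 ≤ p.1 ∧ p.1 < p.2 ∧ p.2 ≤ m)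
    (a s b : ℤ) (has : a < s) (hsb : s < b) :
    alphaF (S ∩ Jsub J 0 s) a s + alphaF (S ∩ Jsub J s m) s b ≤ alphaF S a b := by
  obtain ⟨T1, hT1S, hT1c, hT1pw, hT1m⟩ := exists_alphaF (S ∩ Jsub J 0 s) a s
  obtain ⟨T2, hT2S, hT2c, hT2pw, hT2m⟩ := exists_alphaF (S ∩ Jsub J s m) s b
  have h1 : ∀ p ∈ T1, p ∈ S ∧ 0 ≤ p.1 ∧ p.1 < p.2 ∧ p.2 ≤ s := by
    intro p hp
    have := hT1S hp
    rw [Finset.mem_inter, Jsub, Finset.mem_filter] at this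
    obtain ⟨hps, hpj, -, hp2⟩ := this
    exact ⟨hps, (hJ p hpj).1, (hJ p hpj).2.1, hp2⟩
  have h2 : ∀ p ∈ T2, p ∈ S ∧ s ≤ p.1 ∧ p.1 < p.2 ∧ p.2 ≤ m := by
    intro p hp
    have := hT2S hp
    rw [Finset.mem_inter, Jsub, Finset.mem_filter] at this
    obtain ⟨hps, hpj, hp1, hp2⟩ := this
    exact ⟨hps, hp1, (hJ p hpj).2.1, hp2⟩
  have hdisj : Disjoint T1 T2 := by
    rw [Finset.disjoint_left]
    intro p hp1 hp2
    have := (h1 p hp1).2.2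
    have := (h2 p hp2).2.1
    omega
  have hsub : T1 ∪ T2 ⊆ S := by
    intro p hp
    rcases Finset.mem_union.mp hp with hp | hp
    exacts [(h1 p hp).1, (h2 p hp).1]
  have hpw : ((↑(T1 ∪ T2) : Set (ℤ × ℤ)).Pairwise fun a b => ¬ Meets a b) := by
    intro x hx y hy hxy
    rw [Finset.coe_union] at hx hy
    have cross : ∀ x' y' : ℤ × ℤ, x' ∈ T1 → y' ∈ T2 → ¬ Meets x' y' := by
      intro x' y' hx' hy' hm
      rw [meets_iff] at hm
      have := (h1 x' hx').2.2.2
      have := (h2 y' hy').2.1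
      omega
    rcases hx with hx | hx <;> rcases hy with hy | hy
    · exact hT1pw hx hy hxy
    · exact cross x y hx hy
    · exact fun hm => cross y x hy hx (meets_comm.mp hm)
    · exact hT2pw hx hy hxy
  have hm : ∀ p ∈ T1 ∪ T2, Meets p (a, b) := by
    intro p hp
    rw [meets_iff]
    rcases Finset.mem_union.mp hp with hp | hp
    · have := (meets_iff p (a, s)).mp (hT1m p hp)
      simp only [Prod.fst, Prod.snd] at this ⊢
      omega
    · have := (meets_iff p (s, b)).mp (hT2m p hp)
      simp only [Prod.fst, Prod.snd] at this ⊢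
      omega
  calc alphaF (S ∩ Jsub J 0 s) a s + alphaF (S ∩ Jsub J s m) s b
      = T1.card + T2.card := by rw [hT1c, hT2c]
    _ = (T1 ∪ T2).card := (Finset.card_union_of_disjoint hdisj).symm
    _ ≤ alphaF S a b := le_alphaF hsub hpw hm

lemma cut_le (m : ℤ) (J S : Finset (ℤ × ℤ)) (hSJ : S ⊆ J)
    (hJ : ∀ p ∈ J, 0 ≤ p.1 ∧ p.1 < p.2 ∧ p.2 ≤ m)
    (a s b : ℤ) (ha : 0 ≤ a) (has : a < s) (hsb : s < b) (hbm : b ≤ m)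
    (e : ℤ × ℤ) (heS : e ∈ S)
    (he : e = ((s - 1, s) : ℤ × ℤ) ∨ e = ((s, s + 1) : ℤ × ℤ)) :
    alphaF S a b ≤ alphaF (S ∩ Jsub J 0 s) a s + alphaF (S ∩ Jsub J s m) s b := by
  classical
  apply alphaF_le
  intro T hTS hpw hmeet
  have hfacts : ∀ p ∈ T, 0 ≤ p.1 ∧ p.1 < p.2 ∧ p.2 ≤ m := fun p hp => hJ p (hSJ (hTS hp))
  set T1 := T.filter (fun p => p.2 ≤ s) with hT1def
  set Tr := T.filter (fun p => ¬ p.2 ≤ s) with hTrdef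
  set T2 := Tr.filter (fun p => s ≤ p.1) with hT2def
  set C := Tr.filter (fun p => ¬ s ≤ p.1) with hCdef
  have hcard1 : T1.card + Tr.card = T.card :=
    Finset.card_filter_add_card_filter_not _
  have hcard2 : T2.card + C.card = Tr.card :=
    Finset.card_filter_add_card_filter_not _
  have hT1mem : ∀ p ∈ T1, p ∈ T ∧ p.2 ≤ s := fun p hp => Finset.mem_filter.mp hp
  have hT2mem : ∀ p ∈ T2, p ∈ T ∧ s ≤ p.1 := by
    intro p hp
    have h := Finset.mem_filter.mp hp
    exact ⟨(Finset.mem_filter.mp h.1).1, h.2⟩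
  have hCmem : ∀ p ∈ C, p ∈ T ∧ p.1 < s ∧ s < p.2 := by
    intro p hp
    have h := Finset.mem_filter.mp hp
    have h' := Finset.mem_filter.mp h.1
    exact ⟨h'.1, by omega, by omega⟩
  -- T1 is a valid witness for the left part
  have hT1sub : T1 ⊆ S ∩ Jsub J 0 s := by
    intro p hp
    obtain ⟨hpT, hp2⟩ := hT1mem p hp
    rw [Finset.mem_inter, Jsub, Finset.mem_filter]
    exact ⟨hTS hpT, hSJ (hTS hpT), (hfacts p hpT).1, hp2⟩
  have hT1pw : ((T1 : Set (ℤ × ℤ)).Pairwise fun a b => ¬ Meets a b) :=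
    hpw.mono (Finset.coe_subset.mpr (Finset.filter_subset _ _))
  have hT1m : ∀ p ∈ T1, Meets p (a, s) := by
    intro p hp
    obtain ⟨hpT, hp2⟩ := hT1mem p hp
    have := (meets_iff p (a, b)).mp (hmeet p hpT)
    rw [meets_iff]
    simp only [Prod.fst, Prod.snd] at this ⊢
    omega
  -- T2 is a valid witness for the right part
  have hT2sub : T2 ⊆ S ∩ Jsub J s m := by
    intro p hp
    obtain ⟨hpT, hp1⟩ := hT2mem p hp
    rw [Finset.mem_inter, Jsub, Finset.mem_filter]
    exact ⟨hTS hpT, hSJ (hTS hpT), hp1, (hfacts p hpT).2.2⟩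
  have hT2pw : ((T2 : Set (ℤ × ℤ)).Pairwise fun a b => ¬ Meets a b) :=
    hpw.mono (Finset.coe_subset.mpr
      (subset_trans (Finset.filter_subset _ _) (Finset.filter_subset _ _)))
  have hT2m : ∀ p ∈ T2, Meets p (s, b) := by
    intro p hp
    obtain ⟨hpT, hp1⟩ := hT2mem p hp
    have := (meets_iff p (a, b)).mp (hmeet p hpT)
    have := (hfacts p hpT).2.1
    rw [meets_iff]
    simp only [Prod.fst, Prod.snd] at *
    omega
  have hCcard : C.card ≤ 1 := by
    rw [Finset.card_le_one]
    intro x hx y hy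
    by_contra hxy
    obtain ⟨hxT, hx1, hx2⟩ := hCmem x hx
    obtain ⟨hyT, hy1, hy2⟩ := hCmem y hy
    refine hpw (Finset.mem_coe.mpr hxT) (Finset.mem_coe.mpr hyT) hxy ?_
    rw [meets_iff]
    omega
  rcases Finset.eq_empty_or_nonempty C with hC | ⟨c, hc⟩
  · -- no crossing interval
    have : C.card = 0 := by rw [hC]; rfl
    have hle1 : T1.card ≤ alphaF (S ∩ Jsub J 0 s) a s := le_alphaF hT1sub hT1pw hT1m
    have hle2 : T2.card ≤ alphaF (S ∩ Jsub J s m) s b := le_alphaF hT2sub hT2pw hT2m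
    omega
  · -- one crossing interval c; replace it with the appropriate backbone interval e
    obtain ⟨hcT, hc1, hc2⟩ := hCmem c hc
    have hCc : C.card = 1 := le_antisymm hCcard (Finset.card_pos.mpr ⟨c, hc⟩)
    have hint : e.1 = s - 1 ∧ e.2 = s ∨ e.1 = s ∧ e.2 = s + 1 := by
      rcases he with he | he <;> subst he <;> simp
    -- e's interval is contained in c's interval, as integer inequalities
    have hec1 : c.1 ≤ e.1 := by omega
    have hec2 : e.2 ≤ c.2 := by omega
    have hmeets_e_c : ∀ p : ℤ × ℤ, Meets p e → Meets p c := by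
      intro p hm
      rw [meets_iff] at hm ⊢
      omega
    rcases he with he | he
    · -- e = (s-1, s), insert into T1
      obtain ⟨he1, he2⟩ : e.1 = s - 1 ∧ e.2 = s := by rw [he]; exact ⟨rfl, rfl⟩
      have heT1 : e ∉ T1 := by
        intro heT1
        have hce : c ≠ e := by intro h; rw [h] at hc2; omega
        exact hpw (Finset.mem_coe.mpr hcT) (Finset.mem_coe.mpr ((hT1mem e heT1).1)) hce
          (meets_comm.mp (hmeets_e_c e (by rw [meets_iff]; omega)))
      have hdis : ∀ p ∈ T1, ¬ Meets p e := by
        intro p hp hm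
        obtain ⟨hpT, hp2⟩ := hT1mem p hp
        have hpc : p ≠ c := by intro h; rw [h] at hp2; omega
        exact hpw (Finset.mem_coe.mpr hpT) (Finset.mem_coe.mpr hcT) hpc (hmeets_e_c p hm)
      have hsub' : insert e T1 ⊆ S ∩ Jsub J 0 s := by
        intro p hp
        rcases Finset.mem_insert.mp hp with hp | hp
        · subst hp
          rw [Finset.mem_inter, Jsub, Finset.mem_filter]
          exact ⟨heS, hSJ heS, by omega, by omega⟩
        · exact hT1sub hp
      have hpw' : ((↑(insert e T1) : Set (ℤ × ℤ)).Pairwise fun a b => ¬ Meets a b) := by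
        rw [Finset.coe_insert]
        haveI : Std.Symm (fun a b : ℤ × ℤ => ¬ Meets a b) := ⟨fun x y h => meets_symmetric h⟩; rw [Set.pairwise_insert_of_symm]
        exact ⟨hT1pw, fun p hp _ hm => hdis p (Finset.mem_coe.mp hp) (meets_comm.mp hm)⟩
      have hm' : ∀ p ∈ insert e T1, Meets p (a, s) := by
        intro p hp
        rcases Finset.mem_insert.mp hp with hp | hp
        · subst hp; rw [meets_iff]; simp only [Prod.fst, Prod.snd]; omega
        · exact hT1m p hp
      have hle1 : T1.card + 1 ≤ alphaF (S ∩ Jsub J 0 s) a s := by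
        have := le_alphaF hsub' hpw' hm'
        rwa [Finset.card_insert_of_notMem heT1] at this
      have hle2 : T2.card ≤ alphaF (S ∩ Jsub J s m) s b := le_alphaF hT2sub hT2pw hT2m
      omega
    · -- e = (s, s+1), insert into T2
      obtain ⟨he1, he2⟩ : e.1 = s ∧ e.2 = s + 1 := by rw [he]; exact ⟨rfl, rfl⟩
      have heT2 : e ∉ T2 := by
        intro heT2
        have hce : c ≠ e := by intro h; rw [h] at hc1; omega
        exact hpw (Finset.mem_coe.mpr hcT) (Finset.mem_coe.mpr ((hT2mem e heT2).1)) hce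
          (meets_comm.mp (hmeets_e_c e (by rw [meets_iff]; omega)))
      have hdis : ∀ p ∈ T2, ¬ Meets p e := by
        intro p hp hm
        obtain ⟨hpT, hp1⟩ := hT2mem p hp
        have hpc : p ≠ c := by intro h; rw [h] at hp1; omega
        exact hpw (Finset.mem_coe.mpr hpT) (Finset.mem_coe.mpr hcT) hpc (hmeets_e_c p hm)
      have hsub' : insert e T2 ⊆ S ∩ Jsub J s m := by
        intro p hp
        rcases Finset.mem_insert.mp hp with hp | hp
        · subst hp
          rw [Finset.mem_inter, Jsub, Finset.mem_filter]
          exact ⟨heS, hSJ heS, by omega, by omega⟩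
        · exact hT2sub hp
      have hpw' : ((↑(insert e T2) : Set (ℤ × ℤ)).Pairwise fun a b => ¬ Meets a b) := by
        rw [Finset.coe_insert]
        haveI : Std.Symm (fun a b : ℤ × ℤ => ¬ Meets a b) := ⟨fun x y h => meets_symmetric h⟩; rw [Set.pairwise_insert_of_symm]
        exact ⟨hT2pw, fun p hp _ hm => hdis p (Finset.mem_coe.mp hp) (meets_comm.mp hm)⟩
      have hm' : ∀ p ∈ insert e T2, Meets p (s, b) := by
        intro p hp
        rcases Finset.mem_insert.mp hp with hp | hp
        · subst hp; rw [meets_iff]; simp only [Prod.fst, Prod.snd]; omega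
        · exact hT2m p hp
      have hle2 : T2.card + 1 ≤ alphaF (S ∩ Jsub J s m) s b := by
        have := le_alphaF hsub' hpw' hm'
        rwa [Finset.card_insert_of_notMem heT2] at this
      have hle1 : T1.card ≤ alphaF (S ∩ Jsub J 0 s) a s := le_alphaF hT1sub hT1pw hT1m
      omega

end AlphaCutAux

/-- Lemma (cut): let `0 ≤ a < s < b ≤ m`. If `(P, Q)` is a 2-partition of a
vertebrate family `J` with `(s-1, s) ∈ P` and `(s, s+1) ∈ Q`, then
`α(P, a, b) = α(P ∩ J(0,s), a, s) + α(P ∩ J(s,m), s, b)` and likewise for `Q`. -/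
theorem alpha_cut
    (v : ℕ) (hv : 1 ≤ v) (m : ℤ) (hm : 1 ≤ m)
    (J : Finset (ℤ × ℤ)) (hJ : Vertebrate m J)
    (a s b : ℤ) (ha : 0 ≤ a) (has : a < s) (hsb : s < b) (hbm : b ≤ m)
    (P Q : Finset (ℤ × ℤ)) (hPQ : TwoPartition P Q J)
    (hsP : ((s - 1, s) : ℤ × ℤ) ∈ P) (hsQ : ((s, s + 1) : ℤ × ℤ) ∈ Q) :
    alphaF P a b = alphaF (P ∩ Jsub J 0 s) a s + alphaF (P ∩ Jsub J s m) s b ∧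
    alphaF Q a b = alphaF (Q ∩ Jsub J 0 s) a s + alphaF (Q ∩ Jsub J s m) s b := by
  have hPJ : P ⊆ J := hPQ.1 ▸ Finset.subset_union_left
  have hQJ : Q ⊆ J := hPQ.1 ▸ Finset.subset_union_right
  constructor
  · exact le_antisymm
      (cut_le m J P hPJ hJ.1 a s b ha has hsb hbm _ hsP (Or.inl rfl))
      (cut_ge m J P hPJ hJ.1 a s b has hsb)
  · exact le_antisymm
      (cut_le m J Q hQJ hJ.1 a s b ha has hsb hbm _ hsQ (Or.inr rfl))
      (cut_ge m J Q hQJ hJ.1 a s b has hsb)
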